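/- Let R be an integral domain, d ≥ 1, and let δ be a real number with 0 ≤ δ ≤ 1 such that δ·m is a natural number. Then every assignment a′ ∈ R^n satisfies at most δ·m of the m linear equations if and only if for every shift b ∈ R^{d·w} the shifted polynomial F_d(Y_d + b) has at least ((4−δ)·m)^d non-constant monomials. -/

import Mathlib

open MvPolynomial

open scoped Classical

noncomputable section

/-- Extension of an `m × n` matrix to a function `ℕ → ℕ → R` vanishing outside its range. -/
def Aext {R : Type*} [CommRing R] (n m : ℕ) (A : Matrix (Fin m) (Fin n) R) : ℕ → ℕ → R :=
  fun i j => if h : i < m ∧ j < n then A ⟨i, h.1⟩ ⟨j, h.2⟩ else 0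

/-- The `w × w` matrix `C` of the paper (Section 5), with `w = max (2n) (2m)`:
`C_{i,j} = A_{i, j−w+n}` if `i < m` and `j ≥ w − n` (`0`-indexed), and `0` otherwise;
i.e. `A` is the top right block of `C` and the rest of `C` is zeros. -/
def Cmat {R : Type*} [CommRing R] (n m : ℕ) (A : Matrix (Fin m) (Fin n) R) :
    Matrix (Fin (max (2 * n) (2 * m))) (Fin (max (2 * n) (2 * m))) R :=
  fun i j =>
    if i.val < m ∧ max (2 * n) (2 * m) - n ≤ j.val then
      Aext n m A i.val (j.val - (max (2 * n) (2 * m) - n))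
    else 0

/-- The vector `e ∈ R^w`: `e_i = b_i` for `i < m` and `e_i = 0` otherwise. -/
def evec {R : Type*} [CommRing R] (n m : ℕ) (b : Fin m → R) :
    Fin (max (2 * n) (2 * m)) → R :=
  fun i => if h : i.val < m then b ⟨i.val, h⟩ else 0

/-- The polynomial `Q_S(y_1,…,y_w) = Σ_{i,j} C_{i,j}·y_i·y_j + Σ_i e_i·y_i + e_0`
of Section 5 of the paper. -/
def QS {R : Type*} [CommRing R] (n m : ℕ) (A : Matrix (Fin m) (Fin n) R)
    (b : Fin m → R) (e0 : R) : MvPolynomial (Fin (max (2 * n) (2 * m))) R :=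
  (∑ i, ∑ j, C (Cmat n m A i j) * X i * X j) + (∑ i, C (evec n m b i) * X i) + C e0

/-- The shift of a multivariate polynomial by a vector `a`: the image of `f` under the
`R`-algebra endomorphism sending each variable `y_i` to `y_i + a_i`. -/
def shift {R : Type*} [CommRing R] {σ : Type*} (a : σ → R) (f : MvPolynomial σ R) :
    MvPolynomial σ R :=
  aeval (fun i => X i + C (a i)) f

/-- The projection `a′ ∈ R^n` of `a ∈ R^w` to its last `n` coordinates:
`a′_j = a_{j + w − n}`. -/
def lastn {R : Type*} (n m : ℕ) (a : Fin (max (2 * n) (2 * m)) → R) : Fin n → R :=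
  fun j => a ⟨j.val + (max (2 * n) (2 * m) - n), by have := j.isLt; omega⟩

/-- The number of non-constant monomials (monomials of total degree at least `1`)
with nonzero coefficient in `f`. -/
def nonConst {R : Type*} [CommRing R] {σ : Type*} (f : MvPolynomial σ R) : ℕ :=
  (f.support.filter fun mo => mo ≠ 0).card


/-- `Fd n m d A b e0` is the product `F_d = ∏_{k=1}^d rename_k(Q_S)` of `d` copies of
`Q_S` in pairwise disjoint sets of `w` variables each. -/
def Fd {R : Type*} [CommRing R] (n m d : ℕ) (A : Matrix (Fin m) (Fin n) R)
    (b : Fin m → R) (e0 : R) :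
    MvPolynomial (Fin d × Fin (max (2 * n) (2 * m))) R :=
  ∏ k : Fin d, rename (fun i => (k, i)) (QS n m A b e0)


section AuxLemmas
open scoped Pointwise



variable {R : Type*} [CommRing R] {σ : Type*}

lemma support_sum_monomial_inj [DecidableEq (σ →₀ ℕ)] {I : Type*} (S : Finset I) (μ : I → (σ →₀ ℕ)) (c : I → R)
    (hinj : Set.InjOn μ S) :
    (∑ s ∈ S, (monomial (μ s) (c s) : MvPolynomial σ R)).support
      = (S.filter fun s => c s ≠ 0).image μ := by
  ext t
  rw [Finset.mem_image, MvPolynomial.mem_support_iff, coeff_sum]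
  simp_rw [coeff_monomial]
  by_cases h : ∃ s ∈ S, μ s = t
  · obtain ⟨s, hs, hst⟩ := h
    rw [Finset.sum_eq_single_of_mem s hs ?hz]
    case hz =>
      intro s' hs' hne
      have hne' : ¬ (μ s' = t) := fun he => hne (hinj hs' hs (he.trans hst.symm))
      simp [hne']
    rw [if_pos hst]
    constructor
    · intro hc; exact ⟨s, Finset.mem_filter.mpr ⟨hs, hc⟩, hst⟩
    · rintro ⟨s', hs', he⟩
      rw [Finset.mem_filter] at hs'
      have hss : s' = s := hinj hs'.1 hs (he.trans hst.symm)
      rw [← hss]; exact hs'.2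
  · push_neg at h
    rw [Finset.sum_eq_zero ?hz2]
    case hz2 =>
      intro s' hs'; simp [h s' hs']
    constructor
    · intro h0; exact absurd rfl h0
    · rintro ⟨s', hs', he⟩
      exact ((h s' (Finset.mem_filter.mp hs').1) he).elim

/-- `f` only uses variables in `V`. -/
def VarsIn (f : MvPolynomial σ R) (V : Set σ) : Prop :=
  ∀ p ∈ f.support, ∀ x, p x ≠ 0 → x ∈ V

lemma coeff_mul_disjoint {f g : MvPolynomial σ R} {Sf Sg : Set σ}
    (hdisj : Disjoint Sf Sg) (hf : VarsIn f Sf) (hg : VarsIn g Sg)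
    {μ ν : σ →₀ ℕ} (hμ : ∀ x, μ x ≠ 0 → x ∈ Sf) (hν : ∀ x, ν x ≠ 0 → x ∈ Sg) :
    coeff (μ + ν) (f * g) = coeff μ f * coeff ν g := by
  rw [coeff_mul]
  rw [Finset.sum_eq_single_of_mem (μ, ν) (Finset.HasAntidiagonal.mem_antidiagonal.mpr rfl)]
  rintro ⟨u, v⟩ huv hne
  rw [Finset.HasAntidiagonal.mem_antidiagonal] at huv
  by_cases hcu : coeff u f = 0
  · simp [hcu]
  by_cases hcv : coeff v g = 0
  · simp [hcv]
  exfalso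
  have hu : ∀ x, u x ≠ 0 → x ∈ Sf := fun x hx => hf u (MvPolynomial.mem_support_iff.mpr hcu) x hx
  have hv : ∀ x, v x ≠ 0 → x ∈ Sg := fun x hx => hg v (MvPolynomial.mem_support_iff.mpr hcv) x hx
  have huμ : u = μ := by
    ext x
    have hsum : u x + v x = μ x + ν x := by
      have := DFunLike.congr_fun huv x; simpa using this
    by_cases hxf : x ∈ Sf
    · have h1 : v x = 0 := by
        by_contra hc; exact (Set.disjoint_left.mp hdisj hxf) (hv x hc)
      have h2 : ν x = 0 := by
        by_contra hc; exact (Set.disjoint_left.mp hdisj hxf) (hν x hc)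
      omega
    · have h1 : u x = 0 := by by_contra hc; exact hxf (hu x hc)
      have h2 : μ x = 0 := by by_contra hc; exact hxf (hμ x hc)
      omega
  have hvν : v = ν := by
    have := huv
    rw [huμ] at this
    exact add_left_cancel this
  exact hne (by rw [huμ, hvν])

lemma support_mul_disjoint [IsDomain R] {f g : MvPolynomial σ R} {Sf Sg : Set σ}
    (hdisj : Disjoint Sf Sg) (hf : VarsIn f Sf) (hg : VarsIn g Sg) :
    (f * g).support = f.support + g.support := by
  apply Finset.Subset.antisymm (MvPolynomial.support_mul f g)
  intro t ht
  rw [Finset.mem_add] at ht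
  obtain ⟨μ, hμ, ν, hν, rfl⟩ := ht
  rw [MvPolynomial.mem_support_iff]
  rw [coeff_mul_disjoint hdisj hf hg (fun x hx => hf μ hμ x hx) (fun x hx => hg ν hν x hx)]
  exact mul_ne_zero (MvPolynomial.mem_support_iff.mp hμ) (MvPolynomial.mem_support_iff.mp hν)

lemma card_support_mul_disjoint [IsDomain R] {f g : MvPolynomial σ R} {Sf Sg : Set σ}
    (hdisj : Disjoint Sf Sg) (hf : VarsIn f Sf) (hg : VarsIn g Sg) :
    (f * g).support.card = f.support.card * g.support.card := by
  rw [support_mul_disjoint hdisj hf hg, ← Finset.image_add_product]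
  rw [Finset.card_image_of_injOn, Finset.card_product]
  rintro ⟨μ, ν⟩ h1 ⟨μ', ν'⟩ h2 he
  simp only [Finset.coe_product, Set.mem_prod, Finset.mem_coe] at h1 h2
  simp only at he
  have hμ : ∀ x, μ x ≠ 0 → x ∈ Sf := fun x hx => hf μ h1.1 x hx
  have hν : ∀ x, ν x ≠ 0 → x ∈ Sg := fun x hx => hg ν h1.2 x hx
  have hμ' : ∀ x, μ' x ≠ 0 → x ∈ Sf := fun x hx => hf μ' h2.1 x hx
  have hν' : ∀ x, ν' x ≠ 0 → x ∈ Sg := fun x hx => hg ν' h2.2 x hx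
  have hμe : μ = μ' := by
    ext x
    have hsum : μ x + ν x = μ' x + ν' x := by
      have := DFunLike.congr_fun he x; simpa using this
    by_cases hxf : x ∈ Sf
    · have h1' : ν x = 0 := by by_contra hc; exact (Set.disjoint_left.mp hdisj hxf) (hν x hc)
      have h2' : ν' x = 0 := by by_contra hc; exact (Set.disjoint_left.mp hdisj hxf) (hν' x hc)
      omega
    · have h1' : μ x = 0 := by by_contra hc; exact hxf (hμ x hc)
      have h2' : μ' x = 0 := by by_contra hc; exact hxf (hμ' x hc)
      omega
  refine Prod.ext hμe ?_
  simp only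
  rw [hμe] at he
  exact add_left_cancel he

lemma varsIn_mul {f g : MvPolynomial σ R} {Sf Sg : Set σ}
    (hf : VarsIn f Sf) (hg : VarsIn g Sg) : VarsIn (f * g) (Sf ∪ Sg) := by
  intro p hp x hx
  have := MvPolynomial.support_mul f g hp
  rw [Finset.mem_add] at this
  obtain ⟨μ, hμ, ν, hν, rfl⟩ := this
  have hadd : μ x + ν x ≠ 0 := by rwa [← Finsupp.add_apply]
  rcases (by omega : μ x ≠ 0 ∨ ν x ≠ 0) with h | h
  · exact Or.inl (hf μ hμ x h)
  · exact Or.inr (hg ν hν x h)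

lemma varsIn_mono {f : MvPolynomial σ R} {V V' : Set σ} (h : VarsIn f V) (hVV : V ⊆ V') :
    VarsIn f V' := fun p hp x hx => hVV (h p hp x hx)

lemma varsIn_rename {τ : Type*} {h : σ → τ} (hinj : Function.Injective h)
    (q : MvPolynomial σ R) :
    VarsIn (rename h q) (Set.range h) := by
  intro p hp x hx
  rw [support_rename_of_injective hinj] at hp
  obtain ⟨τ0, _, rfl⟩ := Finset.mem_image.mp hp
  have : x ∈ (Finsupp.mapDomain h τ0).support := Finsupp.mem_support_iff.mpr hx
  have := Finsupp.mapDomain_support this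
  obtain ⟨y, _, rfl⟩ := Finset.mem_image.mp this
  exact ⟨y, rfl⟩

lemma card_support_rename {τ : Type*} {h : σ → τ} (hinj : Function.Injective h)
    (q : MvPolynomial σ R) :
    (rename h q).support.card = q.support.card := by
  rw [support_rename_of_injective hinj]
  exact Finset.card_image_of_injective _ (Finsupp.mapDomain_injective hinj)

lemma support_one' [Nontrivial R] : (1 : MvPolynomial σ R).support = {0} := by
  rw [← map_one (C : R →+* MvPolynomial σ R), C_apply, support_monomial, if_neg one_ne_zero]

lemma prod_rename_card [IsDomain R] {τ W : Type*} (q : τ → MvPolynomial W R)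
    (s : Finset τ) :
    VarsIn (∏ k ∈ s, rename (fun i => (k, i)) (q k)) {x : τ × W | x.1 ∈ s} ∧
    (∏ k ∈ s, rename (fun i => (k, i)) (q k)).support.card
      = ∏ k ∈ s, (q k).support.card := by
  classical
  induction s using Finset.cons_induction with
  | empty =>
    constructor
    · intro p hp x hx
      rw [Finset.prod_empty, support_one', Finset.mem_singleton] at hp
      exact absurd (by rw [hp]; rfl) hx
    · simp [support_one']
  | cons a s ha ih =>
    have hinj : Function.Injective (fun i : W => (a, i)) := fun x y hxy => by
      simpa using congrArg Prod.snd hxy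
    have hf : VarsIn (rename (fun i : W => (a, i)) (q a)) {x : τ × W | x.1 = a} := by
      refine varsIn_mono (varsIn_rename hinj (q a)) ?_
      rintro _ ⟨y, rfl⟩; rfl
    have hdisj : Disjoint {x : τ × W | x.1 = a} {x : τ × W | x.1 ∈ s} := by
      rw [Set.disjoint_left]; rintro x (rfl : x.1 = a) hxs; exact ha hxs
    rw [Finset.prod_cons, Finset.prod_cons]
    constructor
    · refine varsIn_mono (varsIn_mul hf ih.1) ?_
      rintro x (hx | hx)
      · exact Finset.mem_cons.mpr (Or.inl hx)
      · exact Finset.mem_cons.mpr (Or.inr hx)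
    · rw [card_support_mul_disjoint hdisj hf ih.1, card_support_rename hinj, ih.2]

lemma nonConst_card (f : MvPolynomial σ R) :
    (f.support.filter fun mo => mo ≠ 0).card
      = f.support.card - (if constantCoeff f = 0 then 0 else 1) := by
  rw [Finset.filter_ne', Finset.card_erase_eq_ite]
  by_cases h : constantCoeff f = 0
  · rw [if_neg, if_pos h, Nat.sub_zero]
    rw [MvPolynomial.mem_support_iff]
    simpa [constantCoeff_eq] using h
  · rw [if_pos, if_neg h]
    rw [MvPolynomial.mem_support_iff]
    simpa [constantCoeff_eq] using h



-- index embeddings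
def e1i (n m : ℕ) (i : Fin m) : Fin (max (2 * n) (2 * m)) :=
  ⟨i.val, by have := i.isLt; omega⟩

def e2i (n m : ℕ) (j : Fin n) : Fin (max (2 * n) (2 * m)) :=
  ⟨j.val + (max (2 * n) (2 * m) - n), by have := j.isLt; omega⟩

variable {R : Type*} [CommRing R] (n m : ℕ) (A : Matrix (Fin m) (Fin n) R)
  (b : Fin m → R) (e0 : R)

lemma e1i_inj (hm : 1 ≤ m) : Function.Injective (e1i n m) := fun i i' h => by
  have := congrArg Fin.val h
  simp only [e1i] at this
  exact Fin.ext this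

lemma e1i_inj' : Function.Injective (e1i n m) := fun i i' h => by
  have := congrArg Fin.val h
  simp only [e1i] at this
  exact Fin.ext this

lemma e2i_inj : Function.Injective (e2i n m) := fun j j' h => by
  have := congrArg Fin.val h
  simp only [e2i] at this
  exact Fin.ext (by omega)

lemma e1i_ne_e2i (i : Fin m) (j : Fin n) : e1i n m i ≠ e2i n m j := by
  intro h
  have := congrArg Fin.val h
  simp only [e1i, e2i] at this
  have h1 := i.isLt; have h2 := j.isLt
  omega

lemma QS_eq :
    QS n m A b e0 =
      (∑ i : Fin m, ∑ j : Fin n, C (A i j) * (X (e1i n m i) * X (e2i n m j)))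
        + (∑ i : Fin m, C (b i) * X (e1i n m i)) + C e0 := by
  unfold QS
  congr 1
  congr 1
  · -- quadratic part
    refine (Finset.sum_of_injOn (e1i n m) (fun a _ b _ h => by
        have := congrArg Fin.val h; exact Fin.ext this) (fun i _ => Finset.mem_coe.mpr (Finset.mem_univ _)) ?_ ?_).symm
    · intro v _ hv
      apply Finset.sum_eq_zero
      intro v2 _
      have hvm : ¬ v.val < m := by
        intro hlt
        exact hv ⟨⟨v.val, hlt⟩, Finset.mem_coe.mpr (Finset.mem_univ _), by apply Fin.ext; rfl⟩
      rw [show Cmat n m A v v2 = 0 from if_neg (by tauto), map_zero, zero_mul, zero_mul]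
    · intro i _
      refine Finset.sum_of_injOn (e2i n m) (fun a _ b _ h => e2i_inj n m h)
        (fun j _ => Finset.mem_coe.mpr (Finset.mem_univ _)) ?_ ?_
      · intro v2 _ hv2
        have hv2n : ¬ (max (2 * n) (2 * m) - n ≤ v2.val) := by
          intro hle
          have hlt : v2.val - (max (2 * n) (2 * m) - n) < n := by
            have := v2.isLt; omega
          exact hv2 ⟨⟨v2.val - (max (2 * n) (2 * m) - n), hlt⟩, Finset.mem_coe.mpr (Finset.mem_univ _), by
            apply Fin.ext; simp only [e2i]; omega⟩
        rw [show Cmat n m A (e1i n m i) v2 = 0 from if_neg (by tauto), map_zero, zero_mul, zero_mul]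
      · intro j _
        have h1 : Cmat n m A (e1i n m i) (e2i n m j) = A i j := by
          unfold Cmat Aext e1i e2i
          rw [if_pos ⟨i.isLt, by simp⟩]
          simp only [Nat.add_sub_cancel]
          rw [dif_pos ⟨i.isLt, j.isLt⟩]
        rw [h1]; ring
  · -- linear part
    refine (Finset.sum_of_injOn (e1i n m) (fun a _ b _ h => by
        have := congrArg Fin.val h; exact Fin.ext this) (fun i _ => Finset.mem_coe.mpr (Finset.mem_univ _)) ?_ ?_).symm
    · intro v _ hv
      have hvm : ¬ v.val < m := by
        intro hlt
        exact hv ⟨⟨v.val, hlt⟩, Finset.mem_coe.mpr (Finset.mem_univ _), by apply Fin.ext; rfl⟩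
      rw [show evec n m b v = 0 from dif_neg hvm, map_zero, zero_mul]
    · intro i _
      have h1 : evec n m b (e1i n m i) = b i := by
        unfold evec e1i
        rw [dif_pos i.isLt]
      rw [h1]

def alphav (a : Fin (max (2 * n) (2 * m)) → R) (i : Fin m) : R :=
  (∑ j, A i j * a (e2i n m j)) + b i

def betav (a : Fin (max (2 * n) (2 * m)) → R) (j : Fin n) : R :=
  ∑ i, a (e1i n m i) * A i j

def gammav (a : Fin (max (2 * n) (2 * m)) → R) : R :=
  (∑ i, a (e1i n m i) * alphav n m A b a i) + e0

lemma shift_QS_eq (a : Fin (max (2 * n) (2 * m)) → R) :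
    shift a (QS n m A b e0) =
      (∑ i : Fin m, ∑ j : Fin n, C (A i j) * (X (e1i n m i) * X (e2i n m j)))
        + (∑ i : Fin m, C (alphav n m A b a i) * X (e1i n m i))
        + (∑ j : Fin n, C (betav n m A a j) * X (e2i n m j))
        + C (gammav n m A b e0 a) := by
  rw [QS_eq]
  unfold shift
  simp only [map_add, map_sum, map_mul, aeval_X, aeval_C, MvPolynomial.algebraMap_eq]
  have expand : ∀ i : Fin m,
      (∑ j, C (A i j) * ((X (e1i n m i) + C (a (e1i n m i))) * (X (e2i n m j) + C (a (e2i n m j)))))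
      = (∑ j, C (A i j) * (X (e1i n m i) * X (e2i n m j)))
        + C (∑ j, A i j * a (e2i n m j)) * X (e1i n m i)
        + (∑ j, C (a (e1i n m i) * A i j) * X (e2i n m j))
        + C (a (e1i n m i) * ∑ j, A i j * a (e2i n m j)) := by
    intro i
    rw [Finset.mul_sum, map_sum, map_sum, Finset.sum_mul, ← Finset.sum_add_distrib,
      ← Finset.sum_add_distrib, ← Finset.sum_add_distrib]
    apply Finset.sum_congr rfl
    intro j _
    simp only [C_mul]
    ring
  simp only [expand]
  rw [Finset.sum_add_distrib, Finset.sum_add_distrib, Finset.sum_add_distrib]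
  have lin : ∀ i : Fin m,
      C (b i) * (X (e1i n m i) + C (a (e1i n m i)))
        = C (b i) * X (e1i n m i) + C (b i * a (e1i n m i)) := by
    intro i; rw [C_mul]; ring
  simp only [lin]
  rw [Finset.sum_add_distrib]
  have swap : (∑ i : Fin m, ∑ j : Fin n, C (a (e1i n m i) * A i j) * X (e2i n m j))
      = ∑ j : Fin n, C (betav n m A a j) * X (e2i n m j) := by
    rw [Finset.sum_comm]
    apply Finset.sum_congr rfl
    intro j _
    rw [betav, map_sum, Finset.sum_mul]
  rw [swap]
  have halpha : (∑ i : Fin m, C (∑ j, A i j * a (e2i n m j)) * X (e1i n m i))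
        + ∑ i : Fin m, C (b i) * X (e1i n m i)
      = ∑ i : Fin m, C (alphav n m A b a i) * X (e1i n m i) := by
    rw [← Finset.sum_add_distrib]
    apply Finset.sum_congr rfl
    intro i _
    rw [alphav, map_add, add_mul]
  have hgamma : (∑ i : Fin m, (C (a (e1i n m i) * ∑ j, A i j * a (e2i n m j)) : MvPolynomial (Fin (max (2 * n) (2 * m))) R))
        + ∑ i : Fin m, C (b i * a (e1i n m i)) + C e0
      = (C (gammav n m A b e0 a) : MvPolynomial (Fin (max (2 * n) (2 * m))) R) := by
    rw [gammav, map_add, map_sum]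
    congr 1
    rw [← Finset.sum_add_distrib]
    apply Finset.sum_congr rfl
    intro i _
    rw [alphav, ← map_add]
    congr 1
    ring
  rw [← halpha, ← hgamma]
  abel

section SupportQS
variable {R : Type*} [CommRing R] {σ : Type*}

lemma CXX (c : R) (u v : σ) :
    C c * (X u * X v) = monomial (Finsupp.single u 1 + Finsupp.single v 1) c := by
  rw [← pow_one (X u), ← pow_one (X v), X_pow_eq_monomial, X_pow_eq_monomial,
    monomial_mul, C_mul_monomial, one_mul, mul_one]

lemma CX1 (c : R) (u : σ) : C c * X u = monomial (Finsupp.single u 1) c := by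
  rw [← pow_one (X u), X_pow_eq_monomial, C_mul_monomial, mul_one]

lemma support_add_disjoint [DecidableEq (σ →₀ ℕ)] {p q : MvPolynomial σ R}
    (h : Disjoint p.support q.support) : (p + q).support = p.support ∪ q.support := by
  ext t
  simp only [Finset.mem_union, MvPolynomial.mem_support_iff, coeff_add]
  by_cases hp : coeff t p = 0 <;> by_cases hq : coeff t q = 0
  · simp [hp, hq]
  · simp [hp, hq]
  · simp [hp, hq]
  · exact (Finset.disjoint_left.mp h (MvPolynomial.mem_support_iff.mpr hp)
      (MvPolynomial.mem_support_iff.mpr hq)).elim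

def wtF (p : σ →₀ ℕ) : ℕ := p.sum fun _ v => v

lemma wtF_add (p q : σ →₀ ℕ) : wtF (p + q) = wtF p + wtF q :=
  Finsupp.sum_add_index' (fun _ => rfl) (fun _ _ _ => rfl)

lemma wtF_single (x : σ) (k : ℕ) : wtF (Finsupp.single x k) = k :=
  Finsupp.sum_single_index rfl

end SupportQS

section QSsupp
variable {R : Type*} [CommRing R] (n m : ℕ) (A : Matrix (Fin m) (Fin n) R)
  (b : Fin m → R) (e0 : R)

def mu1 (p : Fin m × Fin n) : Fin (max (2 * n) (2 * m)) →₀ ℕ :=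
  Finsupp.single (e1i n m p.1) 1 + Finsupp.single (e2i n m p.2) 1

lemma mu1_inj : Function.Injective (mu1 n m) := by
  rintro ⟨i, j⟩ ⟨i', j'⟩ h
  unfold mu1 at h
  have hii : i' = i := by
    have h1 := DFunLike.congr_fun h (e1i n m i)
    have hne1 : e2i n m j ≠ e1i n m i := fun hc => e1i_ne_e2i n m i j hc.symm
    have hne2 : e2i n m j' ≠ e1i n m i := fun hc => e1i_ne_e2i n m i j' hc.symm
    simp only [Finsupp.add_apply, Finsupp.single_apply, if_pos rfl, if_neg hne1,
      if_neg hne2, add_zero] at h1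
    by_cases hii : e1i n m i' = e1i n m i
    · exact Fin.ext (by simpa [e1i] using congrArg Fin.val hii)
    · rw [if_neg hii] at h1; exact absurd h1 one_ne_zero
  subst hii
  have h2 := add_left_cancel h
  have := Finsupp.single_left_injective (one_ne_zero (α := ℕ)) h2
  have hj : j = j' := e2i_inj n m this
  rw [hj]

lemma quad_support :
    (∑ i : Fin m, ∑ j : Fin n, C (A i j) * (X (e1i n m i) * X (e2i n m j))).support
      = ((Finset.univ.filter fun p : Fin m × Fin n => A p.1 p.2 ≠ 0).image (mu1 n m)) := by
  have h : (∑ i : Fin m, ∑ j : Fin n, C (A i j) * (X (e1i n m i) * X (e2i n m j)))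
      = ∑ p : Fin m × Fin n, monomial (mu1 n m p) (A p.1 p.2) := by
    rw [Fintype.sum_prod_type]
    exact Finset.sum_congr rfl fun i _ => Finset.sum_congr rfl fun j _ => CXX _ _ _
  rw [h, support_sum_monomial_inj _ _ _ ((mu1_inj n m).injOn)]

lemma lin1_support (c : Fin m → R) :
    (∑ i : Fin m, C (c i) * X (e1i n m i)).support
      = ((Finset.univ.filter fun i => c i ≠ 0).image
          fun i => Finsupp.single (e1i n m i) 1) := by
  have h : (∑ i : Fin m, C (c i) * X (e1i n m i))
      = ∑ i : Fin m, monomial (Finsupp.single (e1i n m i) 1) (c i) :=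
    Finset.sum_congr rfl fun i _ => CX1 _ _
  rw [h, support_sum_monomial_inj _ _ _ (fun i _ i' _ hh =>
    e1i_inj' n m (Finsupp.single_left_injective (one_ne_zero (α := ℕ)) (by simpa using hh)))]

lemma lin2_support (c : Fin n → R) :
    (∑ j : Fin n, C (c j) * X (e2i n m j)).support
      = ((Finset.univ.filter fun j => c j ≠ 0).image
          fun j => Finsupp.single (e2i n m j) 1) := by
  have h : (∑ j : Fin n, C (c j) * X (e2i n m j))
      = ∑ j : Fin n, monomial (Finsupp.single (e2i n m j) 1) (c j) :=
    Finset.sum_congr rfl fun j _ => CX1 _ _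
  rw [h, support_sum_monomial_inj _ _ _ (fun j _ j' _ hh =>
    e2i_inj n m (Finsupp.single_left_injective (one_ne_zero (α := ℕ)) (by simpa using hh)))]

lemma wt_mem_image_mu1 (s : Finset (Fin m × Fin n)) :
    ∀ t ∈ s.image (mu1 n m), wtF t = 2 := by
  intro t ht
  obtain ⟨p, _, rfl⟩ := Finset.mem_image.mp ht
  rw [mu1, wtF_add, wtF_single, wtF_single]

lemma wt_mem_image_s1 (s : Finset (Fin m)) :
    ∀ t ∈ s.image (fun i => Finsupp.single (e1i n m i) 1), wtF t = 1 := by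
  intro t ht
  obtain ⟨i, _, rfl⟩ := Finset.mem_image.mp ht
  rw [wtF_single]

lemma wt_mem_image_s2 (s : Finset (Fin n)) :
    ∀ t ∈ s.image (fun j => Finsupp.single (e2i n m j) 1), wtF t = 1 := by
  intro t ht
  obtain ⟨j, _, rfl⟩ := Finset.mem_image.mp ht
  rw [wtF_single]

lemma disj12 (s : Finset (Fin m × Fin n)) (s2 : Finset (Fin m)) :
    Disjoint (s.image (mu1 n m)) (s2.image (fun i => Finsupp.single (e1i n m i) 1)) := by
  rw [Finset.disjoint_left]
  intro t h1 h2
  have := wt_mem_image_mu1 n m s t h1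
  have := wt_mem_image_s1 n m s2 t h2
  omega

lemma disj13 (s : Finset (Fin m × Fin n)) (s3 : Finset (Fin n)) :
    Disjoint (s.image (mu1 n m)) (s3.image (fun j => Finsupp.single (e2i n m j) 1)) := by
  rw [Finset.disjoint_left]
  intro t h1 h2
  have := wt_mem_image_mu1 n m s t h1
  have := wt_mem_image_s2 n m s3 t h2
  omega

lemma disj23 (s2 : Finset (Fin m)) (s3 : Finset (Fin n)) :
    Disjoint (s2.image (fun i => Finsupp.single (e1i n m i) 1))
      (s3.image (fun j => Finsupp.single (e2i n m j) 1)) := by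
  rw [Finset.disjoint_left]
  intro t h2 h3
  obtain ⟨i, _, rfl⟩ := Finset.mem_image.mp h2
  obtain ⟨j, _, hj⟩ := Finset.mem_image.mp h3
  exact e1i_ne_e2i n m i j
    (Finsupp.single_left_injective (one_ne_zero (α := ℕ)) (by simpa using hj.symm))

lemma support_shift_QS (a : Fin (max (2 * n) (2 * m)) → R) :
    (shift a (QS n m A b e0)).support
      = (((Finset.univ.filter fun p : Fin m × Fin n => A p.1 p.2 ≠ 0).image (mu1 n m))
          ∪ ((Finset.univ.filter fun i => alphav n m A b a i ≠ 0).image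
              fun i => Finsupp.single (e1i n m i) 1)
          ∪ ((Finset.univ.filter fun j => betav n m A a j ≠ 0).image
              fun j => Finsupp.single (e2i n m j) 1))
        ∪ (C (gammav n m A b e0 a) : MvPolynomial (Fin (max (2 * n) (2 * m))) R).support := by
  classical
  have d1 : Disjoint
      (∑ i : Fin m, ∑ j : Fin n, C (A i j) * (X (e1i n m i) * X (e2i n m j))).support
      (∑ i : Fin m, C (alphav n m A b a i) * X (e1i n m i)).support := by
    rw [quad_support, lin1_support]; exact disj12 n m _ _
  have d2 : Disjoint
      ((∑ i : Fin m, ∑ j : Fin n, C (A i j) * (X (e1i n m i) * X (e2i n m j)))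
        + (∑ i : Fin m, C (alphav n m A b a i) * X (e1i n m i))).support
      (∑ j : Fin n, C (betav n m A a j) * X (e2i n m j)).support := by
    rw [support_add_disjoint d1, quad_support, lin1_support, lin2_support]
    exact Finset.disjoint_union_left.mpr ⟨disj13 n m _ _, disj23 n m _ _⟩
  have d3 : Disjoint
      ((∑ i : Fin m, ∑ j : Fin n, C (A i j) * (X (e1i n m i) * X (e2i n m j)))
        + (∑ i : Fin m, C (alphav n m A b a i) * X (e1i n m i))
        + (∑ j : Fin n, C (betav n m A a j) * X (e2i n m j))).support
      (C (gammav n m A b e0 a) : MvPolynomial (Fin (max (2 * n) (2 * m))) R).support := by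
    rw [support_add_disjoint d2, support_add_disjoint d1, quad_support, lin1_support,
      lin2_support]
    rw [Finset.disjoint_left]
    intro t ht h4
    have h1 : 1 ≤ wtF t := by
      rcases Finset.mem_union.mp ht with h | h
      · rcases Finset.mem_union.mp h with h' | h'
        · rw [wt_mem_image_mu1 n m _ t h']; omega
        · rw [wt_mem_image_s1 n m _ t h']
      · rw [wt_mem_image_s2 n m _ t h]
    have h0 : wtF t = 0 := by
      rw [C_apply, support_monomial] at h4
      split_ifs at h4
      · exact absurd h4 (Finset.notMem_empty t)
      · rw [Finset.mem_singleton] at h4; rw [h4]; rfl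
    omega
  rw [shift_QS_eq, support_add_disjoint d3, support_add_disjoint d2, support_add_disjoint d1,
    quad_support, lin1_support, lin2_support]

lemma card_support_shift_QS (a : Fin (max (2 * n) (2 * m)) → R) :
    (shift a (QS n m A b e0)).support.card
      = ((Finset.univ.filter fun p : Fin m × Fin n => A p.1 p.2 ≠ 0).card
          + (Finset.univ.filter fun i => alphav n m A b a i ≠ 0).card
          + (Finset.univ.filter fun j => betav n m A a j ≠ 0).card)
        + (if gammav n m A b e0 a = 0 then 0 else 1) := by
  classical
  rw [support_shift_QS]
  rw [Finset.card_union_of_disjoint, Finset.card_union_of_disjoint,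
    Finset.card_union_of_disjoint (disj12 n m _ _)]
  · have c1 := Finset.card_image_of_injective
      (Finset.univ.filter fun p : Fin m × Fin n => A p.1 p.2 ≠ 0) (mu1_inj n m)
    have c2 : ((Finset.univ.filter fun i => alphav n m A b a i ≠ 0).image
        (fun i => Finsupp.single (e1i n m i) 1)).card
        = (Finset.univ.filter fun i => alphav n m A b a i ≠ 0).card := by
      apply Finset.card_image_of_injOn
      intro i _ i' _ hh
      exact e1i_inj' n m (Finsupp.single_left_injective (one_ne_zero (α := ℕ)) (by simpa using hh))
    have c3 : ((Finset.univ.filter fun j => betav n m A a j ≠ 0).image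
        (fun j => Finsupp.single (e2i n m j) 1)).card
        = (Finset.univ.filter fun j => betav n m A a j ≠ 0).card := by
      apply Finset.card_image_of_injOn
      intro j _ j' _ hh
      exact e2i_inj n m (Finsupp.single_left_injective (one_ne_zero (α := ℕ)) (by simpa using hh))
    have c4 : (C (gammav n m A b e0 a) :
        MvPolynomial (Fin (max (2 * n) (2 * m))) R).support.card
        = (if gammav n m A b e0 a = 0 then 0 else 1) := by
      rw [C_apply, support_monomial]
      split_ifs <;> simp
    rw [c1, c2, c3, c4]
  · exact Finset.disjoint_union_left.mpr ⟨disj13 n m _ _, disj23 n m _ _⟩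
  · rw [Finset.disjoint_left]
    intro t ht h4
    have h1 : 1 ≤ wtF t := by
      rcases Finset.mem_union.mp ht with h | h
      · rcases Finset.mem_union.mp h with h' | h'
        · rw [wt_mem_image_mu1 n m _ t h']; omega
        · rw [wt_mem_image_s1 n m _ t h']
      · rw [wt_mem_image_s2 n m _ t h]
    have h0 : wtF t = 0 := by
      rw [C_apply, support_monomial] at h4
      split_ifs at h4
      · exact absurd h4 (Finset.notMem_empty t)
      · rw [Finset.mem_singleton] at h4; rw [h4]; rfl
    omega

lemma constantCoeff_shift_QS (a : Fin (max (2 * n) (2 * m)) → R) :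
    constantCoeff (shift a (QS n m A b e0)) = gammav n m A b e0 a := by
  rw [shift_QS_eq]
  simp [map_add, map_sum, map_mul, constantCoeff_C, constantCoeff_X]

lemma varsIn_univ (f : MvPolynomial σ R) : VarsIn f Set.univ :=
  fun _ _ _ _ => Set.mem_univ _

end QSsupp

section Main
variable {R : Type*} [CommRing R] (n m : ℕ) (A : Matrix (Fin m) (Fin n) R)
  (b : Fin m → R) (e0 : R)

lemma shift_Fd (d : ℕ) (bs : Fin d × Fin (max (2 * n) (2 * m)) → R) :
    shift bs (Fd n m d A b e0)
      = ∏ k : Fin d, rename (fun i => (k, i))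
          (shift (fun i => bs (k, i)) (QS n m A b e0)) := by
  unfold shift Fd
  rw [map_prod]
  apply Finset.prod_congr rfl
  intro k _
  rw [aeval_rename, comp_aeval_apply]
  have hfun : ((fun v => X v + C (bs v)) ∘ fun i : Fin (max (2 * n) (2 * m)) => (k, i))
      = (fun i : Fin (max (2 * n) (2 * m)) =>
          (rename (fun i : Fin (max (2 * n) (2 * m)) => (k, i))) (X i + C (bs (k, i)))) := by
    funext i
    simp [Function.comp]
  rw [hfun]

lemma nonConst_shift_QS (a : Fin (max (2 * n) (2 * m)) → R) :
    nonConst (shift a (QS n m A b e0))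
      = (Finset.univ.filter fun p : Fin m × Fin n => A p.1 p.2 ≠ 0).card
          + (Finset.univ.filter fun i => alphav n m A b a i ≠ 0).card
          + (Finset.univ.filter fun j => betav n m A a j ≠ 0).card := by
  rw [nonConst, nonConst_card, card_support_shift_QS, constantCoeff_shift_QS]
  split_ifs <;> omega

lemma cardT_eq (hA : ∀ i, (Finset.univ.filter fun j => A i j ≠ 0).card = 3) :
    ((Finset.univ : Finset (Fin m × Fin n)).filter fun p => A p.1 p.2 ≠ 0).card
      = 3 * m := by
  classical
  rw [Finset.card_filter, Fintype.sum_prod_type]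
  have h : ∀ i : Fin m, (∑ j : Fin n, if A i j ≠ 0 then 1 else 0) = 3 := by
    intro i
    rw [← Finset.card_filter, hA i]
  rw [Finset.sum_congr rfl (fun i _ => h i), Finset.sum_const, Finset.card_univ,
    Fintype.card_fin, smul_eq_mul, mul_comm]

end Main


end AuxLemmas

/-- **Lemma 5.5(1)** (under the integrality hypothesis `δ·m ∈ ℕ`): let `R` be an
integral domain, `d ≥ 1` and `0 ≤ δ ≤ 1` real with `δ·m` a natural number. Then every
assignment `a′ ∈ R^n` satisfies at most `δ·m` of the `m` linear equations if and only if
for every shift `b ∈ R^{d·w}` the shifted polynomial `F_d(Y_d + b)` has at least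
`((4−δ)·m)^d` non-constant monomials. -/
theorem all_satCount_le_iff_nonConst_Fd_ge {R : Type*} [CommRing R] [IsDomain R]
    (n m : ℕ) (hn : 1 ≤ n) (hm : 1 ≤ m) (A : Matrix (Fin m) (Fin n) R)
    (hA : ∀ i, (Finset.univ.filter fun j => A i j ≠ 0).card = 3)
    (b : Fin m → R) (e0 : R)
    (d : ℕ) (hd : 1 ≤ d)
    (δ : ℝ) (hδ0 : 0 ≤ δ) (hδ1 : δ ≤ 1) (hδm : ∃ k : ℕ, (k : ℝ) = δ * m) :
    (∀ a' : Fin n → R,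
        ((Finset.univ.filter fun i : Fin m =>
            (∑ j, A i j * a' j) + b i = 0).card : ℝ) ≤ δ * m)
      ↔ (∀ bs : Fin d × Fin (max (2 * n) (2 * m)) → R,
          ((4 - δ) * m) ^ d ≤ (nonConst (shift bs (Fd n m d A b e0)) : ℝ)) := by
  classical
  obtain ⟨K, hK⟩ := hδm
  have hKm : K ≤ m := by
    have h1 : (K : ℝ) ≤ (m : ℝ) := by
      rw [hK]
      calc δ * m ≤ 1 * m := by
            apply mul_le_mul_of_nonneg_right hδ1 (by positivity)
        _ = m := one_mul _
    exact_mod_cast h1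
  have hK4m : K ≤ 4 * m := by omega
  have hreal : ((4 - δ) * m) = ((4 * m - K : ℕ) : ℝ) := by
    rw [Nat.cast_sub hK4m]
    push_cast
    rw [hK]
    ring
  -- per-shift nonConst of the product
  have key : ∀ bs : Fin d × Fin (max (2 * n) (2 * m)) → R,
      nonConst (shift bs (Fd n m d A b e0))
        = (∏ k : Fin d, (shift (fun i => bs (k, i)) (QS n m A b e0)).support.card)
          - (if (∏ k : Fin d, gammav n m A b e0 (fun i => bs (k, i))) = 0 then 0 else 1) := by
    intro bs
    rw [nonConst, shift_Fd, nonConst_card]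
    have hconst : constantCoeff (∏ k : Fin d, rename (fun i => (k, i))
        (shift (fun i => bs (k, i)) (QS n m A b e0)))
        = ∏ k : Fin d, gammav n m A b e0 (fun i => bs (k, i)) := by
      rw [map_prod]
      exact Finset.prod_congr rfl fun k _ => by
        rw [constantCoeff_rename, constantCoeff_shift_QS]
    rw [hconst]
    congr 1
    exact (prod_rename_card (fun k => shift (fun i => bs (k, i)) (QS n m A b e0))
      Finset.univ).2
  constructor
  · -- forward
    intro H bs
    have hbound : ∀ k : Fin d,
        4 * m - K ≤ nonConst (shift (fun i => bs (k, i)) (QS n m A b e0)) := by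
      intro k
      rw [nonConst_shift_QS, cardT_eq n m A hA]
      set a : Fin (max (2 * n) (2 * m)) → R := fun i => bs (k, i) with ha
      have hsat : (Finset.univ.filter fun i : Fin m =>
          (∑ j, A i j * (fun j' => a (e2i n m j')) j) + b i = 0).card ≤ K := by
        have := H (fun j' => a (e2i n m j'))
        rw [← hK] at this
        exact_mod_cast this
      have hsplit : (Finset.univ.filter fun i : Fin m =>
            (∑ j, A i j * a (e2i n m j)) + b i = 0).card
          + (Finset.univ.filter fun i : Fin m =>
            ¬ ((∑ j, A i j * a (e2i n m j)) + b i = 0)).card = m := by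
        rw [Finset.card_filter_add_card_filter_not, Finset.card_univ,
          Fintype.card_fin]
      have halpha : (Finset.univ.filter fun i => alphav n m A b a i ≠ 0).card
          = (Finset.univ.filter fun i : Fin m =>
            ¬ ((∑ j, A i j * a (e2i n m j)) + b i = 0)).card := rfl
      rw [halpha]
      simp only at hsat
      omega
    have hnc : ∀ k : Fin d,
        nonConst (shift (fun i => bs (k, i)) (QS n m A b e0))
          + (if gammav n m A b e0 (fun i => bs (k, i)) = 0 then 0 else 1)
        = (shift (fun i => bs (k, i)) (QS n m A b e0)).support.card := by
      intro k
      rw [nonConst, nonConst_card, constantCoeff_shift_QS]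
      have hle : (if gammav n m A b e0 (fun i => bs (k, i)) = 0 then 0 else 1)
          ≤ (shift (fun i => bs (k, i)) (QS n m A b e0)).support.card := by
        rw [card_support_shift_QS]
        split_ifs <;> omega
      omega
    rw [key bs, hreal, ← Nat.cast_pow]
    rw [Nat.cast_le]
    by_cases hγ : (∏ k : Fin d, gammav n m A b e0 (fun i => bs (k, i))) = 0
    · rw [if_pos hγ, Nat.sub_zero]
      calc (4 * m - K) ^ d = ∏ _k : Fin d, (4 * m - K) := by
            rw [Finset.prod_const, Finset.card_univ, Fintype.card_fin]
        _ ≤ ∏ k : Fin d, (shift (fun i => bs (k, i)) (QS n m A b e0)).support.card := by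
            apply Finset.prod_le_prod'
            intro k _
            have := hbound k
            have := hnc k
            omega
    · rw [if_neg hγ]
      have hall : ∀ k : Fin d, gammav n m A b e0 (fun i => bs (k, i)) ≠ 0 := by
        intro k hk
        exact hγ (Finset.prod_eq_zero (Finset.mem_univ k) hk)
      have hstep : (4 * m - K + 1) ^ d
          ≤ ∏ k : Fin d, (shift (fun i => bs (k, i)) (QS n m A b e0)).support.card := by
        calc (4 * m - K + 1) ^ d = ∏ _k : Fin d, (4 * m - K + 1) := by
              rw [Finset.prod_const, Finset.card_univ, Fintype.card_fin]
          _ ≤ _ := by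
              apply Finset.prod_le_prod'
              intro k _
              have h1 := hbound k
              have h2 := hnc k
              rw [if_neg (hall k)] at h2
              omega
      have hpow : (4 * m - K) ^ d + 1 ≤ (4 * m - K + 1) ^ d := by
        have := Nat.pow_lt_pow_left (show 4 * m - K < 4 * m - K + 1 by omega) (by omega : d ≠ 0)
        omega
      omega
  · -- backward, by contraposition
    intro H
    by_contra hnotall
    push_neg at hnotall
    obtain ⟨a', ha'⟩ := hnotall
    have hsat : K + 1 ≤ (Finset.univ.filter fun i : Fin m =>
        (∑ j, A i j * a' j) + b i = 0).card := by
      rw [← hK] at ha'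
      have := ha'
      exact_mod_cast Nat.lt_iff_add_one_le.mp (by exact_mod_cast this)
    set sat := (Finset.univ.filter fun i : Fin m =>
        (∑ j, A i j * a' j) + b i = 0).card with hsatdef
    have hsatm : sat ≤ m := by
      have := Finset.card_filter_le (Finset.univ : Finset (Fin m))
        (fun i : Fin m => (∑ j, A i j * a' j) + b i = 0)
      simpa using this
    -- the witness shift
    set cv : Fin (max (2 * n) (2 * m)) → R := fun v =>
      if h : max (2 * n) (2 * m) - n ≤ v.val then
        a' ⟨v.val - (max (2 * n) (2 * m) - n), by have := v.isLt; omega⟩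
      else 0 with hcv
    have hcv1 : ∀ i : Fin m, cv (e1i n m i) = 0 := by
      intro i
      have hi := i.isLt
      have hv : (e1i n m i).val = i.val := rfl
      rw [hcv]
      exact dif_neg (by omega)
    have hcv2 : ∀ j : Fin n, cv (e2i n m j) = a' j := by
      intro j
      have hj := j.isLt
      have hcond : max (2 * n) (2 * m) - n ≤ (e2i n m j).val := by
        show max (2 * n) (2 * m) - n ≤ j.val + (max (2 * n) (2 * m) - n)
        omega
      simp only [hcv]
      rw [dif_pos hcond]
      congr 1
      apply Fin.ext
      show (e2i n m j).val - (max (2 * n) (2 * m) - n) = j.val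
      show j.val + (max (2 * n) (2 * m) - n) - (max (2 * n) (2 * m) - n) = j.val
      omega
    set bs : Fin d × Fin (max (2 * n) (2 * m)) → R := fun p => cv p.2 with hbs
    have hkey := key bs
    -- each factor equals shift cv QS
    have hfac : ∀ k : Fin d, (fun i => bs (k, i)) = cv := by
      intro k; funext i; rfl
    simp only [hfac] at hkey
    -- compute the counts for shift cv QS
    have halphaeq : ∀ i : Fin m, alphav n m A b cv i = (∑ j, A i j * a' j) + b i := by
      intro i
      rw [alphav]
      congr 1
      exact Finset.sum_congr rfl fun j _ => by rw [hcv2 j]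
    have hbeta : ∀ j : Fin n, betav n m A cv j = 0 := by
      intro j
      rw [betav]
      apply Finset.sum_eq_zero
      intro i _
      rw [hcv1 i, zero_mul]
    have hcardα : (Finset.univ.filter fun i => alphav n m A b cv i ≠ 0).card
        = m - sat := by
      have hsplit : (Finset.univ.filter fun i : Fin m =>
            alphav n m A b cv i = 0).card
          + (Finset.univ.filter fun i : Fin m =>
            ¬ (alphav n m A b cv i = 0)).card = m := by
        rw [Finset.card_filter_add_card_filter_not, Finset.card_univ,
          Fintype.card_fin]
      have heqsat : (Finset.univ.filter fun i : Fin m =>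
          alphav n m A b cv i = 0).card = sat := by
        rw [hsatdef]
        congr 1
        apply Finset.filter_congr
        intro i _
        rw [halphaeq i]
      have hne : (Finset.univ.filter fun i : Fin m =>
          ¬ (alphav n m A b cv i = 0)).card
          = (Finset.univ.filter fun i => alphav n m A b cv i ≠ 0).card := rfl
      omega
    have hcardβ : (Finset.univ.filter fun j => betav n m A cv j ≠ 0).card = 0 := by
      rw [Finset.card_eq_zero, Finset.filter_eq_empty_iff]
      intro j _
      rw [hbeta j]
      simp
    have hnc : nonConst (shift cv (QS n m A b e0)) = 3 * m + (m - sat) := by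
      rw [nonConst_shift_QS, cardT_eq n m A hA, hcardα, hcardβ]
      omega
    have hncle : nonConst (shift cv (QS n m A b e0)) ≤ 4 * m - K - 1 := by
      rw [hnc]; omega
    have hNlt : nonConst (shift bs (Fd n m d A b e0)) < (4 * m - K) ^ d := by
      rw [hkey]
      have hsupc : (shift cv (QS n m A b e0)).support.card
          = nonConst (shift cv (QS n m A b e0))
            + (if gammav n m A b e0 cv = 0 then 0 else 1) := by
        rw [nonConst, nonConst_card, constantCoeff_shift_QS]
        have hle : (if gammav n m A b e0 cv = 0 then 0 else 1)
            ≤ (shift cv (QS n m A b e0)).support.card := by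
          rw [card_support_shift_QS]
          split_ifs <;> omega
        omega
      have hprodc : (∏ _k : Fin d, (shift cv (QS n m A b e0)).support.card)
          = (shift cv (QS n m A b e0)).support.card ^ d := by
        rw [Finset.prod_const, Finset.card_univ, Fintype.card_fin]
      rw [hprodc]
      by_cases hγ : gammav n m A b e0 cv = 0
      · have : (∏ _k : Fin d, gammav n m A b e0 cv) = 0 :=
          Finset.prod_eq_zero (Finset.mem_univ ⟨0, by omega⟩) hγ
        rw [if_pos this, Nat.sub_zero, hsupc, if_pos hγ, Nat.add_zero]
        calc (nonConst (shift cv (QS n m A b e0))) ^ d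
            ≤ (4 * m - K - 1) ^ d := Nat.pow_le_pow_left hncle d
          _ < (4 * m - K) ^ d := by
              apply Nat.pow_lt_pow_left _ (by omega : d ≠ 0)
              omega
      · have hγd : (∏ _k : Fin d, gammav n m A b e0 cv) ≠ 0 := by
          rw [Finset.prod_const]
          exact pow_ne_zero _ hγ
        rw [if_neg hγd, hsupc, if_neg hγ]
        have h1 : (nonConst (shift cv (QS n m A b e0)) + 1) ^ d ≤ (4 * m - K) ^ d :=
          Nat.pow_le_pow_left (by omega) d
        have h2 : 1 ≤ (nonConst (shift cv (QS n m A b e0)) + 1) ^ d :=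
          Nat.one_le_pow _ _ (by omega)
        omega
    have := H bs
    rw [hreal, ← Nat.cast_pow, Nat.cast_le] at this
    omega


end
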